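/- arXiv:2505.12779 — 2 statements merged into one kernel-verified Lean document; each statement's English description precedes it below -/
import Mathlib

section
/- In the situation below (M free of rank d over K⟨φ⟩ with ρ-action matrix D, and J a Janet basis for ⟨p_1,…,p_d⟩), one has m_i < ∞ for all i = 1, …, d. -/
/-!
Common setup: the skew polynomial ring `D = K{φ,ρ}` (with commuting endomorphisms
`γφ, γρ : K → K`, `φ·x = γφ(x)·φ`, `ρ·x = γρ(x)·ρ`), the free left `D`-module
`𝓕 = ⊕_{i=1}^d D κ_i`, its monomials `φ^k ρ^j κ_i`, the monomial order, cones,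
Janet bases, and the data attached to a `D`-module `M` that is free over `K⟨φ⟩`.

`𝓕` is realized concretely as finitely supported coefficient functions on the
set of monomial indices `(i, k, j) ↔ φ^k ρ^j κ_i`; multiplication by `φ` resp. `ρ`
is the K-semilinear shift operator `PhiMul` resp. `RhoMul`.
-/

namespace JanetSetup

/-- Index of a monomial `φ^k ρ^j κ_i` of `𝓕`: the triple `(i, k, j)`. -/
abbrev MonIx (d : ℕ) := Fin d × ℕ × ℕ

/-- The free module `𝓕 = ⊕_{i=1}^d D κ_i`, as coefficient functions on monomials. -/
abbrev Fr (K : Type) [Field K] (d : ℕ) : Type := MonIx d →₀ K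

variable {K : Type} [Field K] {d : ℕ}

/-- Left multiplication by the variable `φ` on `𝓕`. -/
noncomputable def PhiMul (γφ : K →+* K) (f : Fr K d) : Fr K d :=
  Finsupp.mapDomain (fun m => (m.1, m.2.1 + 1, m.2.2))
    (Finsupp.mapRange (fun x => γφ x) (map_zero γφ) f)

/-- Left multiplication by the variable `ρ` on `𝓕`. -/
noncomputable def RhoMul (γρ : K →+* K) (f : Fr K d) : Fr K d :=
  Finsupp.mapDomain (fun m => (m.1, m.2.1, m.2.2 + 1))
    (Finsupp.mapRange (fun x => γρ x) (map_zero γρ) f)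

/-- The left `D`-submodule of `𝓕` generated by a set `s` (as a `K`-subspace:
the `K`-span of all `φ^k ρ^j g`, `g ∈ s`). -/
noncomputable def DSpan (γφ γρ : K →+* K) (s : Set (Fr K d)) : Submodule K (Fr K d) :=
  Submodule.span K
    {x | ∃ (k j : ℕ) (g : Fr K d), g ∈ s ∧ x = (PhiMul γφ)^[k] ((RhoMul γρ)^[j] g)}

/-- The monomial order: lexicographic with `ρ ≺ φ`, position-over-term with
`κ_{i₁} ≻ κ_{i₂}` for `i₁ < i₂`. -/
def MLt (a b : MonIx d) : Prop :=
  b.1 < a.1 ∨ (a.1 = b.1 ∧ (a.2.1 < b.2.1 ∨ (a.2.1 = b.2.1 ∧ a.2.2 < b.2.2)))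

/-- `m` is the leading monomial of `f`. -/
def IsLm (f : Fr K d) (m : MonIx d) : Prop :=
  m ∈ f.support ∧ ∀ m' ∈ f.support, m' ≠ m → MLt m' m

/-- The `μ`-cone of a monomial `m`; `μ = (φ ∈ μ, ρ ∈ μ)` as a pair of Booleans. -/
def Cone (μ : Bool × Bool) (m : MonIx d) : Set (MonIx d) :=
  {x | ∃ a b : ℕ, (μ.1 = true ∨ a = 0) ∧ (μ.2 = true ∨ b = 0) ∧
      x = (m.1, m.2.1 + a, m.2.2 + b)}

/-- A Janet basis `{(b_1,μ_1),…,(b_r,μ_r)}` for the submodule `N ⊆ 𝓕`: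
the `b_i` generate `N` as a left `D`-module and the set of leading monomials of
nonzero elements of `N` is the disjoint union of the cones `Mon(μ_i)·lm(b_i)`. -/
structure JanetBasis (γφ γρ : K →+* K) (d : ℕ) (N : Submodule K (Fr K d)) where
  r : ℕ
  b : Fin r → Fr K d
  μ : Fin r → Bool × Bool
  /-- the leading monomial of `b i` -/
  lmb : Fin r → MonIx d
  b_ne : ∀ i, b i ≠ 0
  b_lm : ∀ i, IsLm (b i) (lmb i)
  pair_inj : Function.Injective fun i => (b i, μ i)
  span_eq : DSpan γφ γρ (Set.range b) = N
  lm_cover : ∀ f ∈ N, f ≠ 0 → ∀ m, IsLm f m → ∃ i, m ∈ Cone (μ i) (lmb i)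
  cone_lm : ∀ i, ∀ m ∈ Cone (μ i) (lmb i), ∃ f ∈ N, f ≠ 0 ∧ IsLm f m
  disj : ∀ i i' m, m ∈ Cone (μ i) (lmb i) → m ∈ Cone (μ i') (lmb i') → i = i'

variable (γφ γρ : K →+* K)

/-- `f` is reduced (in normal form) w.r.t. the pairs of `J` indexed by `P`:
no monomial of `f` lies in one of the corresponding cones. -/
def IsReduced {N : Submodule K (Fr K d)} (J : JanetBasis γφ γρ d N)
    (P : Set (Fin J.r)) (f : Fr K d) : Prop :=
  ∀ m ∈ f.support, ∀ i ∈ P, m ∉ Cone (J.μ i) (J.lmb i)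

/-- `h` is the normal form `NF(g, ·)` of `g` with respect to the pairs of `J`
indexed by `P`: the reduction process subtracts left multiples of the `b i`
(`i ∈ P`), so `g - h` lies in the `D`-span of these, and the result is reduced. -/
def IsNFOf {N : Submodule K (Fr K d)} (J : JanetBasis γφ γρ d N)
    (P : Set (Fin J.r)) (g h : Fr K d) : Prop :=
  g - h ∈ DSpan γφ γρ (J.b '' P) ∧ IsReduced γφ γρ J P h

/-- The projection `pr : 𝓕 → M`, `φ^k ρ^j κ_i ↦ F^k S^j κ̄_i`, for a `D`-module `M`
with `φ`-action `F`, `ρ`-action `S` and distinguished elements `κb i = κ̄_i`. -/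
noncomputable def pr {M : Type} [AddCommGroup M] [Module K M]
    (F S : M →+ M) (κb : Fin d → M) (f : Fr K d) : M :=
  f.sum fun m x => x • F^[m.2.1] (S^[m.2.2] (κb m.1))

/-- The relation `p_i = ρ κ_i − Σ_j D_{ij} κ_j ∈ 𝓕`, where the entry `D_{ij} ∈ K⟨φ⟩`
is recorded as the finitely supported coefficient function of its powers of `φ`. -/
noncomputable def pelt (Dmat : Fin d → Fin d → (ℕ →₀ K)) (i : Fin d) : Fr K d :=
  Finsupp.single (i, 0, 1) (1 : K)
    - ∑ j : Fin d, (Dmat i j).sum fun k x => Finsupp.single (j, k, 0) x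

/-- `n_i = inf{n | ∃ (b,μ) ∈ J, lm(b) = φ^n κ_i} ∈ ℕ∪{∞}`. -/
noncomputable def nVal {N : Submodule K (Fr K d)} (J : JanetBasis γφ γρ d N)
    (i : Fin d) : ℕ∞ :=
  sInf {c : ℕ∞ | ∃ n : ℕ, c = n ∧ ∃ ix, J.lmb ix = (i, n, 0)}

/-- `m_i = inf{n | ∃ (b,μ) ∈ J, ∃ l ≥ 0, lm(b) = φ^n ρ^l κ_i} ∈ ℕ∪{∞}`. -/
noncomputable def mVal {N : Submodule K (Fr K d)} (J : JanetBasis γφ γρ d N)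
    (i : Fin d) : ℕ∞ :=
  sInf {c : ℕ∞ | ∃ n : ℕ, c = n ∧ ∃ ix l, J.lmb ix = (i, n, l)}

/-- `W_gen = {φ^j κ_i | 1 ≤ i ≤ d, 0 ≤ j < n_i} ⊆ 𝓕`. -/
def Wgen {N : Submodule K (Fr K d)} (J : JanetBasis γφ γρ d N) : Set (Fr K d) :=
  {w | ∃ (i : Fin d) (j : ℕ), (j : ℕ∞) < nVal γφ γρ J i ∧
      w = Finsupp.single (i, j, 0) (1 : K)}

/-- `W_ind = {φ^j κ_i | 1 ≤ i ≤ d, 0 ≤ j < m_i} ⊆ 𝓕`. -/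
def Wind {N : Submodule K (Fr K d)} (J : JanetBasis γφ γρ d N) : Set (Fr K d) :=
  {w | ∃ (i : Fin d) (j : ℕ), (j : ℕ∞) < mVal γφ γρ J i ∧
      w = Finsupp.single (i, j, 0) (1 : K)}

end JanetSetup

open JanetSetup

/-!
Let `B` bound the `φ`-degrees of the entries of `D`. The `(d²B + 1)(d + 1)` vectors
`F^k S^l κ̄_i` (`k ≤ d²B`, `l ≤ d`) all lie in the span of the `F^a κ̄_c` with `a ≤ dB + d²B`,
which is too small, so a nontrivial `K`-linear relation among them gives `0 ≠ f ∈ 𝓕`, involving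
only `κ_i`, with `pr f = 0`. The relations `p_j` rewrite every element of `𝓕` modulo
`⟨p_1, …, p_d⟩` into one of `ρ`-degree `0`, on which `pr` is injective; hence
`ker pr = ⟨p_1, …, p_d⟩` and `f` lies in it. The leading monomial of `f` involves `κ_i` and lies in
a cone of `J`, whose vertex `lm(b)` then involves `κ_i` as well.
-/

namespace JanetSetup

variable {K : Type} [Field K] {d : ℕ}

section Order

def mKey (m : MonIx d) : (Fin d)ᵒᵈ ×ₗ (ℕ ×ₗ ℕ) := toLex (OrderDual.toDual m.1, toLex m.2)

lemma mKey_injective : Function.Injective (mKey (d := d)) := by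
  rintro ⟨i, k, j⟩ ⟨i', k', j'⟩ h
  simpa [mKey] using h

lemma mLt_iff_mKey_lt (a b : MonIx d) : MLt a b ↔ mKey a < mKey b := by
  simp only [MLt, mKey, Prod.Lex.toLex_lt_toLex, OrderDual.toDual_lt_toDual, OrderDual.toDual_inj]

lemma exists_isLm {f : Fr K d} (hf : f ≠ 0) : ∃ m, IsLm f m := by
  obtain ⟨m, hm, hmax⟩ := f.support.exists_max_image mKey (Finsupp.support_nonempty_iff.mpr hf)
  refine ⟨m, hm, fun m' hm' hne => (mLt_iff_mKey_lt m' m).mpr ?_⟩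
  exact (hmax m' hm').lt_of_ne (mKey_injective.ne hne)

end Order

section JanetBasis

variable {γφ γρ : K →+* K} {N : Submodule K (Fr K d)} (J : JanetBasis γφ γρ d N)

lemma mVal_lt_top_of_lmb_eq {i : Fin d} {ix : Fin J.r} {n l : ℕ} (h : J.lmb ix = (i, n, l)) :
    mVal γφ γρ J i < ⊤ := by
  refine (sInf_le ?_).trans_lt (WithTop.coe_lt_top n)
  exact ⟨n, rfl, ix, l, h⟩

lemma mVal_lt_top_of_mem {i : Fin d} {f : Fr K d} (hfN : f ∈ N) (hf : f ≠ 0)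
    (hfi : ∀ m ∈ f.support, m.1 = i) : mVal γφ γρ J i < ⊤ := by
  obtain ⟨m, hm⟩ := exists_isLm hf
  obtain ⟨ix, a, b, -, -, rfl⟩ := J.lm_cover f hfN hf m hm
  exact mVal_lt_top_of_lmb_eq J (ix := ix) (Prod.ext (hfi _ hm.1 :) rfl)

end JanetBasis

section Shift

variable (γφ γρ : K →+* K)

lemma phiMul_single (m : MonIx d) (x : K) :
    PhiMul γφ (Finsupp.single m x) = Finsupp.single (m.1, m.2.1 + 1, m.2.2) (γφ x) := by
  rw [PhiMul, Finsupp.mapRange_single, Finsupp.mapDomain_single]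

lemma rhoMul_single (m : MonIx d) (x : K) :
    RhoMul γρ (Finsupp.single m x) = Finsupp.single (m.1, m.2.1, m.2.2 + 1) (γρ x) := by
  rw [RhoMul, Finsupp.mapRange_single, Finsupp.mapDomain_single]

@[simp]
lemma phiMul_zero : PhiMul γφ (0 : Fr K d) = 0 := by
  simp [PhiMul]

@[simp]
lemma rhoMul_zero : RhoMul γρ (0 : Fr K d) = 0 := by
  simp [RhoMul]

lemma phiMul_add (f g : Fr K d) : PhiMul γφ (f + g) = PhiMul γφ f + PhiMul γφ g := by
  rw [PhiMul, Finsupp.mapRange_add (map_add γφ), Finsupp.mapDomain_add]; rfl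

lemma rhoMul_add (f g : Fr K d) : RhoMul γρ (f + g) = RhoMul γρ f + RhoMul γρ g := by
  rw [RhoMul, Finsupp.mapRange_add (map_add γρ), Finsupp.mapDomain_add]; rfl

lemma iterate_phiMul_iterate_rhoMul_add (k l : ℕ) (f g : Fr K d) :
    (PhiMul γφ)^[k] ((RhoMul γρ)^[l] (f + g)) =
      (PhiMul γφ)^[k] ((RhoMul γρ)^[l] f) + (PhiMul γφ)^[k] ((RhoMul γρ)^[l] g) := by
  rw [Function.Semiconj₂.iterate (op := (· + ·)) (rhoMul_add γρ) l f g,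
    Function.Semiconj₂.iterate (op := (· + ·)) (phiMul_add γφ) k]

lemma iterate_phiMul_single_one (k : ℕ) (m : MonIx d) :
    (PhiMul γφ)^[k] (Finsupp.single m 1) = Finsupp.single (m.1, m.2.1 + k, m.2.2) 1 := by
  induction k with
  | zero => rfl
  | succ k ih => rw [Function.iterate_succ_apply', ih, phiMul_single, map_one, add_assoc]

lemma iterate_rhoMul_single_one (l : ℕ) (m : MonIx d) :
    (RhoMul γρ)^[l] (Finsupp.single m 1) = Finsupp.single (m.1, m.2.1, m.2.2 + l) 1 := by
  induction l with
  | zero => rfl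
  | succ l ih => rw [Function.iterate_succ_apply', ih, rhoMul_single, map_one, add_assoc]

def rhoDegLE (l : ℕ) : Submodule K (Fr K d) := Finsupp.supported K K {m | m.2.2 ≤ l}

variable {γφ γρ}

lemma phiMul_mem_rhoDegLE {l : ℕ} {f : Fr K d} (hf : f ∈ rhoDegLE l) :
    PhiMul γφ f ∈ rhoDegLE l := by
  classical
  rw [rhoDegLE, Finsupp.mem_supported] at hf ⊢
  intro m hm
  obtain ⟨m', hm', rfl⟩ := Finset.mem_image.mp (Finsupp.mapDomain_support hm)
  exact (hf (Finsupp.support_mapRange hm') : m'.2.2 ≤ l)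

lemma rhoMul_mem_rhoDegLE {l : ℕ} {f : Fr K d} (hf : f ∈ rhoDegLE l) :
    RhoMul γρ f ∈ rhoDegLE (l + 1) := by
  classical
  rw [rhoDegLE, Finsupp.mem_supported] at hf ⊢
  intro m hm
  obtain ⟨m', hm', rfl⟩ := Finset.mem_image.mp (Finsupp.mapDomain_support hm)
  exact Nat.succ_le_succ (hf (Finsupp.support_mapRange hm') : m'.2.2 ≤ l)

lemma iterate_phiMul_iterate_rhoMul_mem_rhoDegLE {n : ℕ} {f : Fr K d} (hf : f ∈ rhoDegLE n)
    (k l : ℕ) : (PhiMul γφ)^[k] ((RhoMul γρ)^[l] f) ∈ rhoDegLE (n + l) := by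
  induction k with
  | zero =>
    induction l with
    | zero => exact hf
    | succ l ih => exact Function.iterate_succ_apply' (RhoMul γρ) l f ▸ rhoMul_mem_rhoDegLE ih
  | succ k ih => exact Function.iterate_succ_apply' (PhiMul γφ) k _ ▸ phiMul_mem_rhoDegLE ih

end Shift

section Reduction

variable (γφ γρ : K →+* K) (Dmat : Fin d → Fin d → (ℕ →₀ K))

lemma single_sub_pelt_mem_rhoDegLE_zero (j : Fin d) :
    Finsupp.single (j, 0, 1) 1 - pelt Dmat j ∈ rhoDegLE 0 := by
  rw [pelt, sub_sub_cancel]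
  refine Submodule.sum_mem _ fun j' _ => Submodule.finsuppSum_mem K _ _ _ fun k _ => ?_
  exact Finsupp.single_mem_supported K _ (show 0 ≤ 0 from le_rfl)

lemma single_succ_eq_iterate_pelt_add (j : Fin d) (k l : ℕ) :
    Finsupp.single (j, k, l + 1) 1 = (PhiMul γφ)^[k] ((RhoMul γρ)^[l] (pelt Dmat j)) +
      (PhiMul γφ)^[k] ((RhoMul γρ)^[l] (Finsupp.single (j, 0, 1) 1 - pelt Dmat j)) := by
  rw [← iterate_phiMul_iterate_rhoMul_add, add_sub_cancel, iterate_rhoMul_single_one,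
    iterate_phiMul_single_one]
  simp only [zero_add, Nat.add_comm 1 l]

lemma rhoDegLE_le_DSpan_pelt_sup (l : ℕ) :
    rhoDegLE l ≤ DSpan γφ γρ (Set.range (pelt Dmat)) ⊔ rhoDegLE 0 := by
  induction l with
  | zero => exact le_sup_right
  | succ l ih =>
    rw [rhoDegLE, Finsupp.supported_eq_span_single, Submodule.span_le]
    rintro _ ⟨⟨j, k, l'⟩, hl' : l' ≤ l + 1, rfl⟩
    rcases Nat.lt_or_eq_of_le hl' with hlt | rfl
    · exact ih (Finsupp.single_mem_supported K _ (Nat.lt_succ_iff.mp hlt))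
    change Finsupp.single (j, k, l + 1) 1 ∈ _
    rw [single_succ_eq_iterate_pelt_add γφ γρ Dmat]
    refine add_mem (Submodule.mem_sup_left (Submodule.subset_span ⟨k, l, _, ⟨j, rfl⟩, rfl⟩)) (ih ?_)
    simpa using iterate_phiMul_iterate_rhoMul_mem_rhoDegLE (γφ := γφ) (γρ := γρ)
      (single_sub_pelt_mem_rhoDegLE_zero Dmat j) k l

lemma DSpan_pelt_sup_rhoDegLE_zero : DSpan γφ γρ (Set.range (pelt Dmat)) ⊔ rhoDegLE 0 = ⊤ := by
  refine eq_top_iff.mpr fun f _ =>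
    rhoDegLE_le_DSpan_pelt_sup γφ γρ Dmat (f.support.sup (·.2.2)) ?_
  exact (Finsupp.mem_supported _ _).mpr fun m hm => Finset.le_sup (f := (·.2.2)) hm

end Reduction

section Projection

variable {γφ γρ : K →+* K} {M : Type} [AddCommGroup M] [Module K M] (F S : M →+ M)
  (κb : Fin d → M)

lemma pr_eq_linearCombination :
    pr F S κb = Finsupp.linearCombination K fun m : MonIx d => F^[m.2.1] (S^[m.2.2] (κb m.1)) :=
  funext fun f => (Finsupp.linearCombination_apply K f).symm

lemma pr_single (m : MonIx d) (x : K) :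
    pr F S κb (Finsupp.single m x) = x • F^[m.2.1] (S^[m.2.2] (κb m.1)) := by
  rw [pr_eq_linearCombination, Finsupp.linearCombination_single]

lemma pr_add (f g : Fr K d) : pr F S κb (f + g) = pr F S κb f + pr F S κb g := by
  rw [pr_eq_linearCombination, map_add]

lemma pr_phiMul (hF : ∀ (x : K) (m : M), F (x • m) = γφ x • F m) (f : Fr K d) :
    pr F S κb (PhiMul γφ f) = F (pr F S κb f) := by
  induction f using Finsupp.induction_linear with
  | zero => simp [pr_eq_linearCombination]
  | add f g hf hg => rw [phiMul_add, pr_add, pr_add, hf, hg, map_add]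
  | single m x => rw [phiMul_single, pr_single, pr_single, hF, Function.iterate_succ_apply']

lemma pr_rhoMul (hS : ∀ (x : K) (m : M), S (x • m) = γρ x • S m)
    (hFS : ∀ m : M, F (S m) = S (F m)) (f : Fr K d) :
    pr F S κb (RhoMul γρ f) = S (pr F S κb f) := by
  induction f using Finsupp.induction_linear with
  | zero => simp [pr_eq_linearCombination]
  | add f g hf hg => rw [rhoMul_add, pr_add, pr_add, hf, hg, map_add]
  | single m x =>
    rw [rhoMul_single, pr_single, pr_single, hS, Function.iterate_succ_apply',
      Function.Commute.iterate_left hFS]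

lemma pr_pelt (Dmat : Fin d → Fin d → (ℕ →₀ K))
    (hact : ∀ i, S (κb i) = ∑ j : Fin d, (Dmat i j).sum fun k x => x • F^[k] (κb j))
    (i : Fin d) : pr F S κb (pelt Dmat i) = 0 := by
  simp [pelt, pr_eq_linearCombination, map_finsuppSum, hact]

lemma pr_eq_zero_of_mem_DSpan_pelt (hF : ∀ (x : K) (m : M), F (x • m) = γφ x • F m)
    (hS : ∀ (x : K) (m : M), S (x • m) = γρ x • S m) (hFS : ∀ m : M, F (S m) = S (F m))
    (Dmat : Fin d → Fin d → (ℕ →₀ K))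
    (hact : ∀ i, S (κb i) = ∑ j : Fin d, (Dmat i j).sum fun k x => x • F^[k] (κb j))
    {f : Fr K d} (hf : f ∈ DSpan γφ γρ (Set.range (pelt Dmat))) : pr F S κb f = 0 := by
  suffices DSpan γφ γρ (Set.range (pelt Dmat)) ≤ LinearMap.ker
      (Finsupp.linearCombination K fun m : MonIx d => F^[m.2.1] (S^[m.2.2] (κb m.1))) by
    rw [pr_eq_linearCombination]; exact this hf
  refine Submodule.span_le.mpr ?_
  rintro _ ⟨k, l, _, ⟨i, rfl⟩, rfl⟩
  rw [SetLike.mem_coe, LinearMap.mem_ker, ← pr_eq_linearCombination,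
    Function.Semiconj.iterate_right (f := pr F S κb) (pr_phiMul F S κb hF) k,
    Function.Semiconj.iterate_right (f := pr F S κb) (pr_rhoMul F S κb hS hFS) l,
    pr_pelt F S κb Dmat hact, iterate_map_zero, iterate_map_zero]

lemma eq_zero_of_pr_eq_zero (hli : LinearIndependent K fun p : Fin d × ℕ => F^[p.2] (κb p.1))
    {f : Fr K d} (hf : f ∈ rhoDegLE 0) (hpr : pr F S κb f = 0) : f = 0 := by
  set ι : Fin d × ℕ → MonIx d := fun p => (p.1, p.2, 0)
  have hι : Function.Injective ι := fun p q h => by simpa [ι, Prod.ext_iff] using h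
  have hind := (linearIndepOn_range_iff (R := K) hι
    fun m : MonIx d => F^[m.2.1] (S^[m.2.2] (κb m.1))).mpr hli
  have hsupp : rhoDegLE 0 ≤ Finsupp.supported K K (Set.range ι) :=
    Finsupp.supported_mono fun m (hm : m.2.2 ≤ 0) =>
      ⟨(m.1, m.2.1), by simp [ι, ← Nat.le_zero.mp hm]⟩
  exact (linearIndepOn_iff (R := K)).mp hind f (hsupp hf)
    (pr_eq_linearCombination (K := K) F S κb ▸ hpr)

end Projection

section Dimension

variable {γφ γρ : K →+* K} {M : Type} [AddCommGroup M] [Module K M] (F S : M →+ M)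
  (κb : Fin d → M)

def phiSpan (A : ℕ) : Submodule K M :=
  Submodule.span K (Set.range fun q : Fin d × Fin (A + 1) => F^[q.2] (κb q.1))

lemma iterate_mem_phiSpan {A a : ℕ} (c : Fin d) (ha : a ≤ A) :
    F^[a] (κb c) ∈ phiSpan (K := K) F κb A :=
  Submodule.subset_span ⟨(c, ⟨a, Nat.lt_succ_of_le ha⟩), rfl⟩

lemma phiSpan_mono : Monotone (phiSpan (K := K) F κb) := fun _ _ h =>
  Submodule.span_le.mpr <| Set.range_subset_iff.mpr fun q => iterate_mem_phiSpan F κb q.1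
    (q.2.is_le.trans h)

lemma finrank_phiSpan_le (A : ℕ) : Module.finrank K (phiSpan (K := K) F κb A) ≤ d * (A + 1) := by
  have h := finrank_range_le_card (R := K) fun q : Fin d × Fin (A + 1) => F^[q.2] (κb q.1)
  rwa [Fintype.card_prod, Fintype.card_fin, Fintype.card_fin] at h

variable (hF : ∀ (x : K) (m : M), F (x • m) = γφ x • F m)
include hF

lemma F_apply_mem_phiSpan {A : ℕ} {w : M} (hw : w ∈ phiSpan (K := K) F κb A) :
    F w ∈ phiSpan (K := K) F κb (A + 1) := by
  induction hw using Submodule.span_induction with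
  | mem x hx =>
    obtain ⟨⟨c, a⟩, rfl⟩ := hx
    rw [← Function.iterate_succ_apply' F]
    exact iterate_mem_phiSpan F κb c (Nat.succ_le_succ a.is_le)
  | zero => rw [map_zero]; exact zero_mem _
  | add x y _ _ hx hy => rw [map_add]; exact add_mem hx hy
  | smul t x _ hx => rw [hF]; exact Submodule.smul_mem _ _ hx

lemma iterate_F_apply_mem_phiSpan {A : ℕ} (k : ℕ) {w : M} (hw : w ∈ phiSpan (K := K) F κb A) :
    F^[k] w ∈ phiSpan (K := K) F κb (A + k) := by
  induction k with
  | zero => exact hw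
  | succ k ih =>
    rw [Function.iterate_succ_apply', ← Nat.add_assoc]
    exact F_apply_mem_phiSpan F κb hF ih

variable (hS : ∀ (x : K) (m : M), S (x • m) = γρ x • S m) (hFS : ∀ m : M, F (S m) = S (F m))
  (Dmat : Fin d → Fin d → (ℕ →₀ K))
  (hact : ∀ i, S (κb i) = ∑ j : Fin d, (Dmat i j).sum fun k x => x • F^[k] (κb j))
  {B : ℕ} (hB : ∀ i j, ∀ k ∈ (Dmat i j).support, k ≤ B)
include hS hFS hact hB

lemma S_apply_mem_phiSpan {A : ℕ} {w : M} (hw : w ∈ phiSpan (K := K) F κb A) :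
    S w ∈ phiSpan (K := K) F κb (A + B) := by
  have hSκ (c : Fin d) : S (κb c) ∈ phiSpan (K := K) F κb B := by
    rw [hact c]
    refine Submodule.sum_mem _ fun j _ => Submodule.finsuppSum_mem K _ _ _ fun k hk => ?_
    exact Submodule.smul_mem _ _
      (iterate_mem_phiSpan F κb j (hB c j k (Finsupp.mem_support_iff.mpr hk)))
  induction hw using Submodule.span_induction with
  | mem x hx =>
    obtain ⟨⟨c, a⟩, rfl⟩ := hx
    rw [← Function.Commute.iterate_left hFS]
    refine phiSpan_mono F κb ?_ (iterate_F_apply_mem_phiSpan F κb hF a (hSκ c))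
    have := a.is_le
    omega
  | zero => rw [map_zero]; exact zero_mem _
  | add x y _ _ hx hy => rw [map_add]; exact add_mem hx hy
  | smul t x _ hx => rw [hS]; exact Submodule.smul_mem _ _ hx

lemma iterate_F_iterate_S_mem_phiSpan (i : Fin d) (k l : ℕ) :
    F^[k] (S^[l] (κb i)) ∈ phiSpan (K := K) F κb (l * B + k) := by
  refine iterate_F_apply_mem_phiSpan F κb hF k ?_
  induction l with
  | zero => rw [Nat.zero_mul]; exact iterate_mem_phiSpan (K := K) F κb (a := 0) i le_rfl
  | succ l ih =>
    rw [Function.iterate_succ_apply', Nat.succ_mul]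
    exact S_apply_mem_phiSpan F S κb hF hS hFS Dmat hact hB ih

/-- These `(d²B + 1)(d + 1)` vectors lie in a span of `d (dB + d²B + 1)`, one fewer, vectors. -/
lemma not_linearIndependent_iterate_F_iterate_S (i : Fin d) :
    ¬ LinearIndependent K
      fun p : Fin (d * d * B + 1) × Fin (d + 1) => F^[p.1] (S^[p.2] (κb i)) := by
  intro hli
  have hcard := (linearIndependent_iff_card_le_finrank_span (R := K)).mp hli
  have hle : Submodule.span K (Set.range fun p : Fin (d * d * B + 1) × Fin (d + 1) =>
      F^[p.1] (S^[p.2] (κb i))) ≤ phiSpan (K := K) F κb (d * B + d * d * B) := by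
    refine Submodule.span_le.mpr (Set.range_subset_iff.mpr fun p => ?_)
    refine phiSpan_mono F κb ?_
      (iterate_F_iterate_S_mem_phiSpan F S κb hF hS hFS Dmat hact hB i p.1 p.2)
    have := Nat.mul_le_mul_right B p.2.is_le
    have := p.1.is_le
    omega
  have : FiniteDimensional K (phiSpan (K := K) F κb (d * B + d * d * B)) :=
    FiniteDimensional.span_of_finite K (Set.finite_range _)
  have hdim := (Submodule.finrank_mono hle).trans (finrank_phiSpan_le F κb _)
  rw [Fintype.card_prod, Fintype.card_fin, Fintype.card_fin] at hcard
  have := hcard.trans hdim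
  nlinarith

end Dimension

section Kernel

variable {γφ γρ : K →+* K} {M : Type} [AddCommGroup M] [Module K M]
  (F S : M →+ M) (κb : Fin d → M)
  (hF : ∀ (x : K) (m : M), F (x • m) = γφ x • F m)
  (hS : ∀ (x : K) (m : M), S (x • m) = γρ x • S m)
  (hFS : ∀ m : M, F (S m) = S (F m)) (Dmat : Fin d → Fin d → (ℕ →₀ K))
  (hact : ∀ i, S (κb i) = ∑ j : Fin d, (Dmat i j).sum fun k x => x • F^[k] (κb j))
include hF hS hFS hact

theorem mem_DSpan_pelt_iff_pr_eq_zero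
    (hli : LinearIndependent K fun p : Fin d × ℕ => F^[p.2] (κb p.1)) {f : Fr K d} :
    f ∈ DSpan γφ γρ (Set.range (pelt Dmat)) ↔ pr F S κb f = 0 := by
  refine ⟨pr_eq_zero_of_mem_DSpan_pelt F S κb hF hS hFS Dmat hact, fun hf => ?_⟩
  have hsup : f ∈ DSpan γφ γρ (Set.range (pelt Dmat)) ⊔ rhoDegLE 0 :=
    DSpan_pelt_sup_rhoDegLE_zero γφ γρ Dmat ▸ Submodule.mem_top
  obtain ⟨n, hn, h, hh, rfl⟩ := Submodule.mem_sup.mp hsup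
  rw [pr_add, pr_eq_zero_of_mem_DSpan_pelt F S κb hF hS hFS Dmat hact hn, zero_add] at hf
  rwa [eq_zero_of_pr_eq_zero F S κb hli hh hf, add_zero]

lemma exists_ne_zero_pr_eq_zero_in_component (i : Fin d) :
    ∃ f : Fr K d, f ≠ 0 ∧ (∀ m ∈ f.support, m.1 = i) ∧ pr F S κb f = 0 := by
  classical
  obtain ⟨B, hB⟩ :=
    (Finset.univ.biUnion fun p : Fin d × Fin d => (Dmat p.1 p.2).support).exists_le
  have hdep := not_linearIndependent_iterate_F_iterate_S F S κb hF hS hFS Dmat hact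
    (fun i j k hk => hB k (Finset.mem_biUnion.mpr ⟨(i, j), Finset.mem_univ _, hk⟩)) i
  rw [linearIndependent_iff] at hdep
  push Not at hdep
  obtain ⟨l, hl, hl0⟩ := hdep
  set e : Fin (d * d * B + 1) × Fin (d + 1) → MonIx d := fun p => (i, p.1, p.2)
  have he : Function.Injective e := fun p q h => by simpa [e, Prod.ext_iff, Fin.ext_iff] using h
  refine ⟨l.mapDomain e, ?_, fun m hm => ?_, ?_⟩
  · rw [← Finsupp.mapDomain_zero (f := e)]
    exact (Finsupp.mapDomain_injective he).ne hl0
  · obtain ⟨p, -, rfl⟩ := Finset.mem_image.mp (Finsupp.mapDomain_support hm)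
    rfl
  · rw [pr_eq_linearCombination, Finsupp.linearCombination_mapDomain]
    exact hl

end Kernel

end JanetSetup

theorem mVal_lt_top_general
    {K : Type} [Field K] {d : ℕ} (γφ γρ : K →+* K)
    {M : Type} [AddCommGroup M] [Module K M]
    -- `M` is a left `D`-module: `F` and `S` are the commuting semilinear actions
    -- of `φ` and `ρ` on `M`
    (F S : M →+ M)
    (hF : ∀ (x : K) (m : M), F (x • m) = γφ x • F m)
    (hS : ∀ (x : K) (m : M), S (x • m) = γρ x • S m)
    (hFS : ∀ m : M, F (S m) = S (F m))
    -- `M` is free of rank `d` as `K⟨φ⟩`-module with basis `κ̄_1, …, κ̄_d`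
    (κb : Fin d → M)
    (hli : LinearIndependent K fun p : Fin d × ℕ => F^[p.2] (κb p.1))
    -- the `ρ`-action on the basis is given by the matrix `D ∈ Mat_{d×d}(K⟨φ⟩)`
    (Dmat : Fin d → Fin d → (ℕ →₀ K))
    (hact : ∀ i, S (κb i) = ∑ j : Fin d, (Dmat i j).sum fun k x => x • F^[k] (κb j))
    -- `J` is a Janet basis of `⟨p_1, …, p_d⟩`
    (J : JanetBasis γφ γρ d (DSpan γφ γρ (Set.range (pelt Dmat))))
    :
    ∀ i : Fin d, mVal γφ γρ J i < ⊤ := by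
  intro i
  obtain ⟨f, hf0, hfi, hpr⟩ :=
    exists_ne_zero_pr_eq_zero_in_component F S κb hF hS hFS Dmat hact i
  have hfN := (mem_DSpan_pelt_iff_pr_eq_zero F S κb hF hS hFS Dmat hact hli).mpr hpr
  exact mVal_lt_top_of_mem J hfN hf0 hfi

theorem mVal_lt_top
    {K : Type} [Field K] {d : ℕ} (γφ γρ : K →+* K)
    (hcomm : ∀ x : K, γφ (γρ x) = γρ (γφ x))
    {M : Type} [AddCommGroup M] [Module K M]
    -- `M` is a left `D`-module: `F` and `S` are the commuting semilinear actions
    -- of `φ` and `ρ` on `M`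
    (F S : M →+ M)
    (hF : ∀ (x : K) (m : M), F (x • m) = γφ x • F m)
    (hS : ∀ (x : K) (m : M), S (x • m) = γρ x • S m)
    (hFS : ∀ m : M, F (S m) = S (F m))
    -- `M` is free of rank `d` as `K⟨φ⟩`-module with basis `κ̄_1, …, κ̄_d`
    (κb : Fin d → M)
    (hli : LinearIndependent K fun p : Fin d × ℕ => F^[p.2] (κb p.1))
    (hsp : Submodule.span K (Set.range fun p : Fin d × ℕ => F^[p.2] (κb p.1)) = ⊤)
    -- the `ρ`-action on the basis is given by the matrix `D ∈ Mat_{d×d}(K⟨φ⟩)`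
    (Dmat : Fin d → Fin d → (ℕ →₀ K))
    (hact : ∀ i, S (κb i) = ∑ j : Fin d, (Dmat i j).sum fun k x => x • F^[k] (κb j))
    -- `J` is a Janet basis of `⟨p_1, …, p_d⟩`
    (J : JanetBasis γφ γρ d (DSpan γφ γρ (Set.range (pelt Dmat))))
    :
    ∀ i : Fin d, mVal γφ γρ J i < ⊤ :=
  mVal_lt_top_general γφ γρ F S hF hS hFS κb hli Dmat hact J
end

section
/- In the situation below (M free of rank d over K⟨φ⟩ with ρ-action matrix D, and J a Janet basis for ⟨p_1,…,p_d⟩), the image pr(W_ind) is a maximal K⟨ρ⟩-linearly independent subset of M; that is: (a) the family (S^l(pr(w)))_{w ∈ W_ind, l ≥ 0} is K-linearly independent, and (b) for every f ∈ M there exist a nonzero polynomial q = Σ_l x_l ρ^l ∈ K⟨ρ⟩ and polynomials q_w ∈ K⟨ρ⟩ (w ∈ W_ind, only finitely many nonzero) such that Σ_l x_l·S^l(f) = Σ_{w ∈ W_ind} q_w·pr(w) in M (where q_w acts via S on pr(w)). -/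
open JanetSetup

/-!
Relations `p_i` rewrite every element of `𝓕` modulo `⟨p_1, …, p_d⟩` into one free of `ρ`, on
which `pr` is injective since `M` is free over `K⟨φ⟩`; hence `ker pr = ⟨p_1, …, p_d⟩`.

(a) A `K`-linear relation among the `S^l(pr w)` is `pr f = 0` with `f` supported on monomials
`φ^j ρ^l κ_i`, `j < m_i`. Then `f ∈ ⟨p⟩`, and a nonzero `f` would have its leading monomial in a
cone of `J`, whose apex `φ^n ρ^l' κ_i` has `m_i ≤ n ≤ j`.

(b) The `f ∈ M` whose `S`-orbit is finite-dimensional modulo `V = K⟨ρ⟩·pr(W_ind)` form a subspace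
containing `V`, and `f` belongs to it as soon as `q·f` does for some `q ≠ 0`. Going up the monomial
order, `F^j κ̄_i` lies in `V` if `j < m_i`; otherwise `φ^{j-n} b`, for `b ∈ J` with leading monomial
`φ^n ρ^l κ_i`, `n ≤ j`, is a relation expressing `q·F^j κ̄_i` through smaller monomials. So all of
`M` is finite modulo `V`, and then the orbit of any `f` is linearly dependent modulo `V`.
-/

lemma AddMonoidHom.iterate_map_sum {M ι : Type*} [AddCommMonoid M] (f : M →+ M) (n : ℕ)
    (s : Finset ι) (g : ι → M) : f^[n] (∑ i ∈ s, g i) = ∑ i ∈ s, f^[n] (g i) :=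
  map_sum ((show AddMonoid.End M from f) ^ n) g s

section OrbitFinite

variable {K : Type} [Field K] {M : Type*} [AddCommGroup M] [Module K M] {γ : K →+* K}
  {S : M →+ M}

lemma iterate_map_smul_of_semilinear
    {Φ : M → M} (h : ∀ (x : K) (m : M), Φ (x • m) = γ x • Φ m) (n : ℕ) (x : K) (m : M) :
    Φ^[n] (x • m) = γ^[n] x • Φ^[n] m := by
  induction n generalizing x m with
  | zero => rfl
  | succ n ih => simp only [Function.iterate_succ_apply, h, ih]

lemma mapsTo_span_of_semilinear (hS : ∀ (x : K) (m : M), S (x • m) = γ x • S m) {s : Set M}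
    (hs : Set.MapsTo S s s) : Set.MapsTo S (Submodule.span K s) (Submodule.span K s) := by
  intro v hv
  rw [SetLike.mem_coe] at hv ⊢
  induction hv using Submodule.span_induction with
  | mem x hx => exact Submodule.subset_span (hs hx)
  | zero => simpa only [map_zero] using zero_mem _
  | add x y _ _ hx hy => simpa only [map_add] using add_mem hx hy
  | smul a x _ hx => simpa only [hS] using Submodule.smul_mem _ _ hx

/-- Elements whose `S`-orbit is finite-dimensional modulo `V`. For `S`-stable `V` these are the
elements `f` with `q·f ∈ V` for some `q ≠ 0`; in this form they visibly make up a subspace. -/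
def orbitFiniteMod (hS : ∀ (x : K) (m : M), S (x • m) = γ x • S m) (V : Submodule K M) :
    Submodule K M where
  carrier := {f | ∃ B : Finset M, ∀ l, S^[l] f ∈ V ⊔ Submodule.span K B}
  zero_mem' := ⟨∅, fun l => by simp only [iterate_map_zero, zero_mem]⟩
  add_mem' := by
    classical
    rintro f g ⟨B, hB⟩ ⟨C, hC⟩
    have hle : ∀ D ⊆ B ∪ C, V ⊔ Submodule.span K (D : Set M) ≤ V ⊔ Submodule.span K ↑(B ∪ C) :=
      fun D hD => sup_le_sup_left (Submodule.span_mono (by exact_mod_cast hD)) _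
    exact ⟨B ∪ C, fun l => by
      rw [iterate_map_add]
      exact add_mem (hle B Finset.subset_union_left (hB l))
        (hle C Finset.subset_union_right (hC l))⟩
  smul_mem' := by
    rintro x f ⟨B, hB⟩
    exact ⟨B, fun l => by
      rw [iterate_map_smul_of_semilinear hS]
      exact Submodule.smul_mem _ _ (hB l)⟩

variable {hS : ∀ (x : K) (m : M), S (x • m) = γ x • S m} {V : Submodule K M}

lemma le_orbitFiniteMod (hV : Set.MapsTo S V V) : V ≤ orbitFiniteMod hS V :=
  fun _ hf => ⟨∅, fun l => Submodule.mem_sup_left (hV.iterate l hf)⟩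

lemma iterate_mem_orbitFiniteMod {f : M} (hf : f ∈ orbitFiniteMod hS V) (l : ℕ) :
    S^[l] f ∈ orbitFiniteMod hS V := by
  obtain ⟨B, hB⟩ := hf
  exact ⟨B, fun l' => by rw [← Function.iterate_add_apply]; exact hB _⟩

/-- By induction on `t`, `S^t f` lies in `V` plus the span of the orbit of `q·f` and of
`f, …, S^{n-1} f`, where `n = deg q`. -/
lemma mem_orbitFiniteMod_of_sum_mem {f : M} {q : ℕ →₀ K} (hq : q ≠ 0)
    (h : (q.sum fun l x => x • S^[l] f) ∈ orbitFiniteMod hS V) : f ∈ orbitFiniteMod hS V := by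
  classical
  obtain ⟨B, hB⟩ := h
  have hsupp := Finsupp.support_nonempty_iff.mpr hq
  set n := q.support.max' hsupp
  set U := V ⊔ Submodule.span K ↑(B ∪ (Finset.range n).image fun s => S^[s] f)
  have hBU : V ⊔ Submodule.span K (B : Set M) ≤ U :=
    sup_le_sup_left (Submodule.span_mono (by simp)) _
  refine ⟨B ∪ (Finset.range n).image fun s => S^[s] f, fun t => ?_⟩
  induction t using Nat.strong_induction_on with
  | _ t ih =>
    by_cases ht : t < n
    · exact Submodule.mem_sup_right <| Submodule.subset_span <| Finset.mem_coe.mpr <|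
        Finset.mem_union_right _ (Finset.mem_image_of_mem _ (Finset.mem_range.mpr ht))
    obtain ⟨k, rfl⟩ := Nat.exists_eq_add_of_le (not_lt.mp ht)
    have hkq : S^[k] (q.sum fun l x => x • S^[l] f)
        = γ^[k] (q n) • S^[n + k] f
          + ∑ l ∈ q.support.erase n, γ^[k] (q l) • S^[l + k] f := by
      rw [Finsupp.sum, ← Finset.add_sum_erase _ _ (q.support.max'_mem hsupp)]
      simp only [iterate_map_add, AddMonoidHom.iterate_map_sum, iterate_map_smul_of_semilinear hS,
        ← Function.iterate_add_apply, Nat.add_comm k]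
      rfl
    have hlower : ∑ l ∈ q.support.erase n, γ^[k] (q l) • S^[l + k] f ∈ U :=
      U.sum_mem fun l hl => U.smul_mem _ <| ih _ <| by
        have := q.support.le_max' l (Finset.mem_of_mem_erase hl)
        have := Finset.ne_of_mem_erase hl
        omega
    have hlead : γ^[k] (q n) • S^[n + k] f ∈ U := by
      have := U.sub_mem (hBU (hB k)) hlower
      rwa [hkq, add_sub_cancel_right] at this
    have hne : γ^[k] (q n) ≠ 0 :=
      fun h0 => Finsupp.mem_support_iff.mp (q.support.max'_mem hsupp)
        (Function.Injective.iterate γ.injective k (h0.trans (iterate_map_zero γ k).symm))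
    have := U.smul_mem (γ^[k] (q n))⁻¹ hlead
    rwa [smul_smul, inv_mul_cancel₀ hne, one_smul] at this

/-- The classes of the `S^l f` modulo `V` lie in a finite-dimensional space, so they are
linearly dependent. -/
lemma exists_sum_mem_of_mem_orbitFiniteMod {f : M} (hf : f ∈ orbitFiniteMod hS V) :
    ∃ q : ℕ →₀ K, q ≠ 0 ∧ (q.sum fun l x => x • S^[l] f) ∈ V := by
  obtain ⟨B, hB⟩ := hf
  have hdep : ¬ LinearIndependent K fun l => V.mkQ (S^[l] f) := by
    intro hli
    have hrange : Set.range (fun l => V.mkQ (S^[l] f)) ≤ Submodule.span K (V.mkQ '' B) := by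
      refine Set.range_subset_iff.mpr fun l => ?_
      obtain ⟨v, hv, b, hb, hvb⟩ := Submodule.mem_sup.mp (hB l)
      have hv0 : V.mkQ v = 0 := (Submodule.Quotient.mk_eq_zero V).mpr hv
      rw [← hvb, map_add, hv0, zero_add, ← Submodule.map_span]
      exact Submodule.mem_map_of_mem hb
    have := (B.finite_toSet.image V.mkQ).to_subtype
    have := hli.finite_of_le_span_finite _ _ hrange
    exact not_finite ℕ
  obtain ⟨q, hq, hq0⟩ : ∃ q : ℕ →₀ K,
      Finsupp.linearCombination K (fun l => V.mkQ (S^[l] f)) q = 0 ∧ q ≠ 0 := by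
    simpa [linearIndependent_iff] using hdep
  refine ⟨q, hq0, (Submodule.Quotient.mk_eq_zero V).mp ?_⟩
  rw [← hq, Finsupp.linearCombination_apply, ← V.mkQ_apply, map_finsuppSum]
  simp only [map_smul]

end OrbitFinite

namespace JanetSetup

variable {K : Type} [Field K] {d : ℕ}

def orderKey (m : MonIx d) : (Fin d)ᵒᵈ ×ₗ ℕ ×ₗ ℕ := toLex (OrderDual.toDual m.1, toLex m.2)

lemma orderKey_injective : Function.Injective (orderKey (d := d)) := by
  intro a b h
  simpa [orderKey, Prod.ext_iff] using h

lemma orderKey_lt_iff {a b : MonIx d} : orderKey a < orderKey b ↔ MLt a b := by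
  simp [orderKey, MLt, Prod.Lex.lt_iff]

lemma wellFounded_mLt : WellFounded (MLt (d := d)) :=
  Subrelation.wf (fun h => orderKey_lt_iff.mpr h) (InvImage.wf orderKey wellFounded_lt)

variable (γφ γρ : K →+* K)

noncomputable def phiMulHom : AddMonoid.End (Fr K d) :=
  (Finsupp.mapDomain.addMonoidHom fun m : MonIx d => (m.1, m.2.1 + 1, m.2.2)).comp
    (Finsupp.mapRange.addMonoidHom γφ.toAddMonoidHom)

noncomputable def rhoMulHom : AddMonoid.End (Fr K d) :=
  (Finsupp.mapDomain.addMonoidHom fun m : MonIx d => (m.1, m.2.1, m.2.2 + 1)).comp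
    (Finsupp.mapRange.addMonoidHom γρ.toAddMonoidHom)

noncomputable def monoMul (k j : ℕ) : AddMonoid.End (Fr K d) :=
  phiMulHom γφ ^ k * rhoMulHom γρ ^ j

lemma monoMul_apply (k j : ℕ) (f : Fr K d) :
    monoMul γφ γρ k j f = (PhiMul γφ)^[k] ((RhoMul γρ)^[j] f) :=
  rfl

lemma phiMul_single_s8 (i : Fin d) (k j : ℕ) (x : K) :
    PhiMul γφ (Finsupp.single (i, k, j) x) = Finsupp.single (i, k + 1, j) (γφ x) := by
  rw [PhiMul, Finsupp.mapRange_single, Finsupp.mapDomain_single]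

lemma rhoMul_single_s8 (i : Fin d) (k j : ℕ) (x : K) :
    RhoMul γρ (Finsupp.single (i, k, j) x) = Finsupp.single (i, k, j + 1) (γρ x) := by
  rw [RhoMul, Finsupp.mapRange_single, Finsupp.mapDomain_single]

lemma monoMul_single (k j : ℕ) (i : Fin d) (a b : ℕ) (x : K) :
    monoMul γφ γρ k j (Finsupp.single (i, a, b) x)
      = Finsupp.single (i, k + a, j + b) (γφ^[k] (γρ^[j] x)) := by
  rw [monoMul_apply]
  have hρ : ∀ j b x, (RhoMul γρ)^[j] (Finsupp.single (i, a, b) x)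
      = Finsupp.single (i, a, b + j) (γρ^[j] x) := by
    intro j
    induction j with
    | zero => intro b x; rfl
    | succ j ih =>
      intro b x
      rw [Function.iterate_succ_apply, rhoMul_single_s8, ih, Function.iterate_succ_apply,
        Nat.add_right_comm, Nat.add_assoc]
  have hφ : ∀ k a x, (PhiMul γφ)^[k] (Finsupp.single (i, a, b + j) x)
      = Finsupp.single (i, a + k, b + j) (γφ^[k] x) := by
    intro k
    induction k with
    | zero => intro a x; rfl
    | succ k ih =>
      intro a x
      rw [Function.iterate_succ_apply, phiMul_single_s8, ih, Function.iterate_succ_apply,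
        Nat.add_right_comm, Nat.add_assoc]
  rw [hρ, hφ, Nat.add_comm a, Nat.add_comm b]

lemma isLm_phiMul {f : Fr K d} {m : MonIx d} (h : IsLm f m) :
    IsLm (PhiMul γφ f) (m.1, m.2.1 + 1, m.2.2) := by
  have hshift : Function.Injective fun m : MonIx d => (m.1, m.2.1 + 1, m.2.2) := by
    intro a b hab
    simpa [Prod.ext_iff] using hab
  have hsupp : (PhiMul γφ f).support = f.support.map ⟨_, hshift⟩ := by
    rw [PhiMul, Finsupp.mapDomain_support_of_injective hshift,
      Finsupp.support_mapRange_of_injective (map_zero γφ) f γφ.injective, Finset.map_eq_image]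
    rfl
  refine ⟨hsupp ▸ Finset.mem_map_of_mem _ h.1, fun m' hm' hne => ?_⟩
  rw [hsupp] at hm'
  obtain ⟨m₀, hm₀, rfl⟩ := Finset.mem_map.mp hm'
  have hlt := h.2 m₀ hm₀ (by rintro rfl; exact hne rfl)
  unfold MLt at hlt ⊢
  dsimp only [Function.Embedding.coeFn_mk]
  omega

lemma isLm_phiMul_iterate {f : Fr K d} {m : MonIx d} (h : IsLm f m) (a : ℕ) :
    IsLm ((PhiMul γφ)^[a] f) (m.1, m.2.1 + a, m.2.2) := by
  induction a with
  | zero => exact h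
  | succ a ih =>
    rw [Function.iterate_succ_apply', ← Nat.add_assoc]
    exact isLm_phiMul γφ ih

section Projection

variable {M : Type} [AddCommGroup M] [Module K M] (F S : M →+ M) (κb : Fin d → M)

def evalMon (m : MonIx d) : M := F^[m.2.1] (S^[m.2.2] (κb m.1))

noncomputable def prₗ : Fr K d →ₗ[K] M := Finsupp.linearCombination K (evalMon F S κb)

lemma prₗ_apply (f : Fr K d) : prₗ F S κb f = pr F S κb f := rfl

lemma prₗ_single (m : MonIx d) (x : K) :
    prₗ F S κb (Finsupp.single m x) = x • evalMon F S κb m :=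
  Finsupp.linearCombination_single K x m

variable {γφ γρ F S}

lemma prₗ_monoMul (hF : ∀ (x : K) (m : M), F (x • m) = γφ x • F m)
    (hS : ∀ (x : K) (m : M), S (x • m) = γρ x • S m) (hFS : Function.Commute F S)
    (k j : ℕ) (f : Fr K d) :
    prₗ F S κb (monoMul γφ γρ k j f) = F^[k] (S^[j] (prₗ F S κb f)) := by
  induction f using Finsupp.induction_linear with
  | zero => simp only [map_zero, iterate_map_zero]
  | add f g hf hg => simp only [map_add, hf, hg, iterate_map_add]
  | single m x =>
    obtain ⟨i, a, b⟩ := m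
    rw [monoMul_single, prₗ_single, prₗ_single, iterate_map_smul_of_semilinear hS,
      iterate_map_smul_of_semilinear hF]
    simp only [evalMon, Function.iterate_add_apply]
    rw [hFS.iterate_iterate a j]

lemma prₗ_pelt (Dmat : Fin d → Fin d → (ℕ →₀ K))
    (hact : ∀ i, S (κb i) = ∑ j : Fin d, (Dmat i j).sum fun k x => x • F^[k] (κb j))
    (i : Fin d) : prₗ F S κb (pelt Dmat i) = 0 := by
  simp only [pelt, map_sub, map_sum, map_finsuppSum, prₗ_single, one_smul, sub_eq_zero]
  exact hact i

end Projection

/-- Using `ρ κ_i ≡ Σ_j D_{ij} κ_j` repeatedly, every element of `𝓕` is congruent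
modulo `⟨p_1, …, p_d⟩` to one free of `ρ`. -/
lemma dSpan_pelt_sup_supported_eq_top (Dmat : Fin d → Fin d → (ℕ →₀ K)) :
    DSpan γφ γρ (Set.range (pelt Dmat)) ⊔ Finsupp.supported K K {m : MonIx d | m.2.2 = 0}
      = ⊤ := by
  set U := DSpan γφ γρ (Set.range (pelt Dmat)) ⊔ Finsupp.supported K K {m : MonIx d | m.2.2 = 0}
  have hsingle : ∀ j (i : Fin d) k (x : K), Finsupp.single (i, k, j) x ∈ U := by
    intro j
    induction j with
    | zero => exact fun i k x => Submodule.mem_sup_right (Finsupp.single_mem_supported K x rfl)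
    | succ j ih =>
      intro i k x
      have hgen : monoMul γφ γρ k j (pelt Dmat i) ∈ DSpan γφ γρ (Set.range (pelt Dmat)) :=
        Submodule.subset_span ⟨k, j, _, ⟨i, rfl⟩, monoMul_apply γφ γρ k j _⟩
      have hsplit : Finsupp.single (i, k, j + 1) (1 : K) = monoMul γφ γρ k j (pelt Dmat i)
          + ∑ j' : Fin d, (Dmat i j').sum fun a y =>
              Finsupp.single (j', k + a, j) (γφ^[k] (γρ^[j] y)) := by
        simp only [pelt, map_sub, map_sum, map_finsuppSum, monoMul_single, iterate_map_one,
          add_zero, sub_add_cancel]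
      rw [← mul_one x, ← smul_eq_mul, ← Finsupp.smul_single, hsplit, smul_add]
      refine U.add_mem (U.smul_mem _ (Submodule.mem_sup_left hgen)) (U.smul_mem _ ?_)
      exact U.sum_mem fun j' _ => Submodule.finsuppSum_mem K U _ _ fun a _ => ih _ _ _
  refine Submodule.eq_top_iff'.mpr fun f => ?_
  induction f using Finsupp.induction_linear with
  | zero => exact U.zero_mem
  | add f g hf hg => exact U.add_mem hf hg
  | single m x => exact hsingle m.2.2 m.1 m.2.1 x

section Kernel

variable {γφ γρ} {M : Type} [AddCommGroup M] [Module K M] {F S : M →+ M} {κb : Fin d → M}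

lemma dSpan_pelt_le_ker_prₗ (hF : ∀ (x : K) (m : M), F (x • m) = γφ x • F m)
    (hS : ∀ (x : K) (m : M), S (x • m) = γρ x • S m) (hFS : Function.Commute F S)
    (Dmat : Fin d → Fin d → (ℕ →₀ K))
    (hact : ∀ i, S (κb i) = ∑ j : Fin d, (Dmat i j).sum fun k x => x • F^[k] (κb j)) :
    DSpan γφ γρ (Set.range (pelt Dmat)) ≤ LinearMap.ker (prₗ F S κb) := by
  rw [DSpan, Submodule.span_le]
  rintro _ ⟨k, j, _, ⟨i, rfl⟩, rfl⟩
  rw [SetLike.mem_coe, LinearMap.mem_ker, ← monoMul_apply, prₗ_monoMul κb hF hS hFS,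
    prₗ_pelt κb Dmat hact, iterate_map_zero, iterate_map_zero]

lemma disjoint_supported_ker_prₗ
    (hli : LinearIndependent K fun p : Fin d × ℕ => F^[p.2] (κb p.1)) :
    Disjoint (Finsupp.supported K K {m : MonIx d | m.2.2 = 0}) (LinearMap.ker (prₗ F S κb)) := by
  have hrange : {m : MonIx d | m.2.2 = 0} = Set.range fun p : Fin d × ℕ => (p.1, p.2, 0) := by
    ext ⟨i, k, j⟩
    simp [eq_comm]
  have hinj : Function.Injective fun p : Fin d × ℕ => ((p.1, p.2, 0) : MonIx d) := by
    intro p q h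
    simpa [Prod.ext_iff] using h
  rw [prₗ, ← linearIndepOn_iff_disjoint, hrange, linearIndepOn_range_iff hinj]
  exact hli

lemma ker_prₗ (hF : ∀ (x : K) (m : M), F (x • m) = γφ x • F m)
    (hS : ∀ (x : K) (m : M), S (x • m) = γρ x • S m) (hFS : Function.Commute F S)
    (hli : LinearIndependent K fun p : Fin d × ℕ => F^[p.2] (κb p.1))
    (Dmat : Fin d → Fin d → (ℕ →₀ K))
    (hact : ∀ i, S (κb i) = ∑ j : Fin d, (Dmat i j).sum fun k x => x • F^[k] (κb j)) :
    LinearMap.ker (prₗ F S κb) = DSpan γφ γρ (Set.range (pelt Dmat)) := by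
  have hle := dSpan_pelt_le_ker_prₗ hF hS hFS Dmat hact
  calc LinearMap.ker (prₗ F S κb)
      = (DSpan γφ γρ (Set.range (pelt Dmat)) ⊔ Finsupp.supported K K {m | m.2.2 = 0})
          ⊓ LinearMap.ker (prₗ F S κb) := by
        rw [dSpan_pelt_sup_supported_eq_top, top_inf_eq]
    _ = DSpan γφ γρ (Set.range (pelt Dmat)) := by
        rw [sup_inf_assoc_of_le _ hle, (disjoint_supported_ker_prₗ hli).eq_bot, sup_bot_eq]

end Kernel

section Janet

variable {γφ γρ}
variable {N : Submodule K (Fr K d)} (J : JanetBasis γφ γρ d N)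

lemma mVal_le_of_lmb_eq {i : Fin d} {n l : ℕ} {ix : Fin J.r} (h : J.lmb ix = (i, n, l)) :
    mVal γφ γρ J i ≤ n :=
  sInf_le ⟨n, rfl, ix, l, h⟩

lemma exists_lmb_of_mVal_le {i : Fin d} {j : ℕ} (h : mVal γφ γρ J i ≤ j) :
    ∃ ix n l, n ≤ j ∧ J.lmb ix = (i, n, l) := by
  have hne : {c : ℕ∞ | ∃ n : ℕ, c = n ∧ ∃ ix l, J.lmb ix = (i, n, l)}.Nonempty := by
    refine Set.nonempty_iff_ne_empty.mpr fun hempty => ?_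
    rw [mVal, hempty, sInf_empty, top_le_iff] at h
    exact ENat.natCast_ne_top j h
  obtain ⟨n, hn, ix, l, hl⟩ := csInf_mem hne
  exact ⟨ix, n, l, by rw [← Nat.cast_le (α := ℕ∞), ← hn]; exact h, hl⟩

/-- A nonzero such `f` would have its leading monomial `φ^k ρ^l κ_i` in a cone `Mon(μ)·lm(b)`
with `lm(b) = φ^n ρ^l' κ_i`, so `m_i ≤ n ≤ k`. -/
lemma JanetBasis.eq_zero_of_support_lt_mVal {f : Fr K d} (hf : f ∈ N)
    (hlt : ∀ m ∈ f.support, (m.2.1 : ℕ∞) < mVal γφ γρ J m.1) : f = 0 := by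
  by_contra hne
  obtain ⟨m, hm⟩ := exists_isLm hne
  obtain ⟨ix, a, b, -, -, rfl⟩ := J.lm_cover f hf hne m hm
  have hle := mVal_le_of_lmb_eq J (ix := ix) rfl
  have := hlt _ hm.1
  simp only at this
  exact absurd this (not_lt.mpr (hle.trans (by exact_mod_cast Nat.le_add_right _ a)))

end Janet

variable {γφ γρ} {M : Type} [AddCommGroup M] [Module K M] {F S : M →+ M} {κb : Fin d → M}

theorem linearIndependent_iterate_pr_Wind (hF : ∀ (x : K) (m : M), F (x • m) = γφ x • F m)
    (hS : ∀ (x : K) (m : M), S (x • m) = γρ x • S m) (hFS : Function.Commute F S)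
    (hli : LinearIndependent K fun p : Fin d × ℕ => F^[p.2] (κb p.1))
    (Dmat : Fin d → Fin d → (ℕ →₀ K))
    (hact : ∀ i, S (κb i) = ∑ j : Fin d, (Dmat i j).sum fun k x => x • F^[k] (κb j))
    (J : JanetBasis γφ γρ d (DSpan γφ γρ (Set.range (pelt Dmat)))) :
    LinearIndependent K
      (fun p : {w : Fr K d // w ∈ Wind γφ γρ J} × ℕ => S^[p.2] (pr F S κb p.1.1)) := by
  choose i j hj hw using fun p : {w : Fr K d // w ∈ Wind γφ γρ J} × ℕ => p.1.2
  let e p : MonIx d := (i p, j p, p.2)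
  have he : Function.Injective e := by
    intro p q hpq
    simp only [e, Prod.ext_iff] at hpq
    exact Prod.ext (Subtype.ext <| by rw [hw, hw, hpq.1, hpq.2.1]) hpq.2.2
  have hfam : (fun p : {w : Fr K d // w ∈ Wind γφ γρ J} × ℕ => S^[p.2] (pr F S κb p.1.1))
      = prₗ F S κb ∘ fun p => Finsupp.single (e p) (1 : K) := by
    funext p
    simp only [Function.comp_apply, ← prₗ_apply, hw p, prₗ_single, one_smul, evalMon, e,
      Function.iterate_zero_apply]
    exact (hFS.iterate_iterate (j p) p.2 (κb (i p))).symm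
  rw [hfam]
  refine ((Finsupp.linearIndependent_single_one K (MonIx d)).comp e he).map ?_
  rw [ker_prₗ hF hS hFS hli Dmat hact]
  have hspan : Submodule.span K (Set.range fun p => Finsupp.single (e p) (1 : K))
      ≤ Finsupp.supported K K {m : MonIx d | (m.2.1 : ℕ∞) < mVal γφ γρ J m.1} :=
    Submodule.span_le.mpr <| Set.range_subset_iff.mpr fun p =>
      Finsupp.single_mem_supported K 1 (hj p)
  refine Submodule.disjoint_def.mpr fun f hf hN => J.eq_zero_of_support_lt_mVal hN ?_
  exact fun m hm => (Finsupp.mem_supported K f).mp (hspan hf) hm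

/-- The relation `pr g = 0`, split into the fibre of its leading monomial `φ^j ρ^l κ_i` and the
rest, reads `q·(F^j κ̄_i) = -pr(rest)` with `q = Σ_l' g(φ^j ρ^l' κ_i) ρ^l' ≠ 0`. -/
lemma mem_orbitFiniteMod_of_prₗ_eq_zero (hS : ∀ (x : K) (m : M), S (x • m) = γρ x • S m)
    (hFS : Function.Commute F S) {V : Submodule K M} {g : Fr K d} {i : Fin d} {j l : ℕ}
    (hg : prₗ F S κb g = 0) (hlm : IsLm g (i, j, l))
    (hlower : ∀ m ∈ g.support, ¬(m.1 = i ∧ m.2.1 = j) → evalMon F S κb m ∈ orbitFiniteMod hS V) :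
    F^[j] (κb i) ∈ orbitFiniteMod hS V := by
  classical
  set T := orbitFiniteMod hS V
  let p : MonIx d → Prop := fun m => m.1 = i ∧ m.2.1 = j
  let e : ℕ → MonIx d := fun l' => (i, j, l')
  have he : Function.Injective e := fun a b h => by simpa [e] using h
  set q := Finsupp.comapDomain e (g.filter p) he.injOn
  have hfibre : g.filter p = Finsupp.mapDomain e q := by
    refine (Finsupp.mapDomain_comapDomain e he _ fun m hm => ?_).symm
    obtain ⟨-, hi, hj⟩ := Finset.mem_filter.mp (Finsupp.support_filter p g ▸ hm)
    exact ⟨m.2.2, by simp [e, ← hi, ← hj]⟩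
  have hq : q ≠ 0 := fun h0 => Finsupp.mem_support_iff.mp hlm.1 <| by
    simpa [q, e, p, Finsupp.filter_apply] using DFunLike.congr_fun h0 l
  have hqsum : (q.sum fun l' x => x • S^[l'] (F^[j] (κb i))) = prₗ F S κb (g.filter p) := by
    rw [hfibre, prₗ, Finsupp.linearCombination_mapDomain, Finsupp.linearCombination_apply]
    exact Finsupp.sum_congr fun l' _ => by rw [Function.comp_apply, evalMon, hFS.iterate_iterate]
  have hrest : prₗ F S κb (g.filter fun m => ¬p m) ∈ T := by
    rw [prₗ, Finsupp.linearCombination_apply]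
    refine Submodule.finsuppSum_mem K T _ _ fun m hm => ?_
    by_cases hpm : p m
    · simp [hpm] at hm
    · rw [Finsupp.filter_apply, if_pos hpm] at hm
      exact T.smul_mem _ (hlower m (Finsupp.mem_support_iff.mpr hm) hpm)
  have hsplit : prₗ F S κb (g.filter p) + prₗ F S κb (g.filter fun m => ¬p m) = 0 := by
    rw [← map_add, Finsupp.filter_add_filter_not, hg]
  refine mem_orbitFiniteMod_of_sum_mem hq ?_
  rw [hqsum, eq_neg_of_add_eq_zero_left hsplit]
  exact T.neg_mem hrest

def windOrbit (F S : M →+ M) (κb : Fin d → M) {N : Submodule K (Fr K d)}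
    (J : JanetBasis γφ γρ d N) : Set M :=
  {x | ∃ w ∈ Wind γφ γρ J, ∃ l : ℕ, x = S^[l] (pr F S κb w)}

lemma mapsTo_windOrbit {N : Submodule K (Fr K d)} (J : JanetBasis γφ γρ d N) :
    Set.MapsTo S (windOrbit F S κb J) (windOrbit F S κb J) := by
  rintro _ ⟨w, hw, l, rfl⟩
  exact ⟨w, hw, l + 1, (Function.iterate_succ_apply' _ _ _).symm⟩

lemma iterate_κb_mem_orbitFiniteMod (hF : ∀ (x : K) (m : M), F (x • m) = γφ x • F m)
    (hS : ∀ (x : K) (m : M), S (x • m) = γρ x • S m) (hFS : Function.Commute F S)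
    (Dmat : Fin d → Fin d → (ℕ →₀ K))
    (hact : ∀ i, S (κb i) = ∑ j : Fin d, (Dmat i j).sum fun k x => x • F^[k] (κb j))
    (J : JanetBasis γφ γρ d (DSpan γφ γρ (Set.range (pelt Dmat)))) (m : MonIx d) :
    F^[m.2.1] (κb m.1) ∈ orbitFiniteMod hS (Submodule.span K (windOrbit F S κb J)) := by
  have hV := mapsTo_span_of_semilinear hS (mapsTo_windOrbit (F := F) (κb := κb) J)
  induction m using wellFounded_mLt.induction with
  | _ m ih =>
  obtain ⟨i, j, l₀⟩ := m
  by_cases hj : (j : ℕ∞) < mVal γφ γρ J i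
  · refine le_orbitFiniteMod hV (Submodule.subset_span ⟨_, ⟨i, j, hj, rfl⟩, 0, ?_⟩)
    rw [← prₗ_apply, prₗ_single, one_smul]
    rfl
  obtain ⟨ix, n, l, hnj, hlmb⟩ := exists_lmb_of_mVal_le J (not_lt.mp hj)
  have hgN : (PhiMul γφ)^[j - n] (J.b ix) ∈ DSpan γφ γρ (Set.range (pelt Dmat)) :=
    J.span_eq.le (Submodule.subset_span ⟨j - n, 0, J.b ix, ⟨ix, rfl⟩, rfl⟩)
  have hlm : IsLm ((PhiMul γφ)^[j - n] (J.b ix)) (i, j, l) := by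
    simpa [hlmb, Nat.add_sub_cancel' hnj] using isLm_phiMul_iterate γφ (J.b_lm ix) (j - n)
  refine mem_orbitFiniteMod_of_prₗ_eq_zero hS hFS (dSpan_pelt_le_ker_prₗ hF hS hFS Dmat hact hgN)
    hlm fun m hm hfibre => ?_
  have hlt : MLt (m.1, m.2.1, 0) (i, j, l₀) := by
    rcases hlm.2 m hm (by rintro rfl; exact hfibre ⟨rfl, rfl⟩) with h | ⟨h₁, h₂ | ⟨h₂, -⟩⟩
    · exact Or.inl h
    · exact Or.inr ⟨h₁, Or.inl h₂⟩
    · exact absurd ⟨h₁, h₂⟩ hfibre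
  rw [evalMon, hFS.iterate_iterate]
  exact iterate_mem_orbitFiniteMod (ih _ hlt) _

end JanetSetup

theorem pr_Wind_maximal_independent_general
    {K : Type} [Field K] {d : ℕ} (γφ γρ : K →+* K)
    {M : Type} [AddCommGroup M] [Module K M]
    -- `M` is a left `D`-module: `F` and `S` are the commuting semilinear actions
    -- of `φ` and `ρ` on `M`
    (F S : M →+ M)
    (hF : ∀ (x : K) (m : M), F (x • m) = γφ x • F m)
    (hS : ∀ (x : K) (m : M), S (x • m) = γρ x • S m)
    (hFS : ∀ m : M, F (S m) = S (F m))
    -- `M` is free of rank `d` as `K⟨φ⟩`-module with basis `κ̄_1, …, κ̄_d`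
    (κb : Fin d → M)
    (hli : LinearIndependent K fun p : Fin d × ℕ => F^[p.2] (κb p.1))
    (hsp : Submodule.span K (Set.range fun p : Fin d × ℕ => F^[p.2] (κb p.1)) = ⊤)
    -- the `ρ`-action on the basis is given by the matrix `D ∈ Mat_{d×d}(K⟨φ⟩)`
    (Dmat : Fin d → Fin d → (ℕ →₀ K))
    (hact : ∀ i, S (κb i) = ∑ j : Fin d, (Dmat i j).sum fun k x => x • F^[k] (κb j))
    -- `J` is a Janet basis of `⟨p_1, …, p_d⟩`
    (J : JanetBasis γφ γρ d (DSpan γφ γρ (Set.range (pelt Dmat))))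
    :
    LinearIndependent K
      (fun p : {w : Fr K d // w ∈ Wind γφ γρ J} × ℕ => S^[p.2] (pr F S κb p.1.1)) ∧
    ∀ f : M, ∃ q : ℕ →₀ K, q ≠ 0 ∧
      (q.sum fun l x => x • S^[l] f) ∈
        Submodule.span K
          {m : M | ∃ w ∈ Wind γφ γρ J, ∃ l : ℕ, m = S^[l] (pr F S κb w)} := by
  refine ⟨linearIndependent_iterate_pr_Wind hF hS hFS hli Dmat hact J, fun f => ?_⟩
  have htop : ⊤ ≤ orbitFiniteMod hS (Submodule.span K (windOrbit F S κb J)) := by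
    rw [← hsp, Submodule.span_le]
    rintro _ ⟨⟨i, k⟩, rfl⟩
    exact iterate_κb_mem_orbitFiniteMod hF hS hFS Dmat hact J (i, k, 0)
  exact exists_sum_mem_of_mem_orbitFiniteMod (htop Submodule.mem_top)

theorem pr_Wind_maximal_independent
    {K : Type} [Field K] {d : ℕ} (γφ γρ : K →+* K)
    (hcomm : ∀ x : K, γφ (γρ x) = γρ (γφ x))
    {M : Type} [AddCommGroup M] [Module K M]
    -- `M` is a left `D`-module: `F` and `S` are the commuting semilinear actions
    -- of `φ` and `ρ` on `M`
    (F S : M →+ M)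
    (hF : ∀ (x : K) (m : M), F (x • m) = γφ x • F m)
    (hS : ∀ (x : K) (m : M), S (x • m) = γρ x • S m)
    (hFS : ∀ m : M, F (S m) = S (F m))
    -- `M` is free of rank `d` as `K⟨φ⟩`-module with basis `κ̄_1, …, κ̄_d`
    (κb : Fin d → M)
    (hli : LinearIndependent K fun p : Fin d × ℕ => F^[p.2] (κb p.1))
    (hsp : Submodule.span K (Set.range fun p : Fin d × ℕ => F^[p.2] (κb p.1)) = ⊤)
    -- the `ρ`-action on the basis is given by the matrix `D ∈ Mat_{d×d}(K⟨φ⟩)`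
    (Dmat : Fin d → Fin d → (ℕ →₀ K))
    (hact : ∀ i, S (κb i) = ∑ j : Fin d, (Dmat i j).sum fun k x => x • F^[k] (κb j))
    -- `J` is a Janet basis of `⟨p_1, …, p_d⟩`
    (J : JanetBasis γφ γρ d (DSpan γφ γρ (Set.range (pelt Dmat))))
    :
    LinearIndependent K
      (fun p : {w : Fr K d // w ∈ Wind γφ γρ J} × ℕ => S^[p.2] (pr F S κb p.1.1)) ∧
    ∀ f : M, ∃ q : ℕ →₀ K, q ≠ 0 ∧
      (q.sum fun l x => x • S^[l] f) ∈
        Submodule.span K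
          {m : M | ∃ w ∈ Wind γφ γρ J, ∃ l : ℕ, m = S^[l] (pr F S κb w)} :=
  pr_Wind_maximal_independent_general γφ γρ F S hF hS hFS κb hli hsp Dmat hact J
end
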